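/- arXiv:1512.04155 — 5 statements merged into one kernel-verified Lean document; each statement's English description precedes it below -/
import Mathlib

section
/- Let n ≥ 2 be an integer. Let B be a symmetric real n×n matrix with trace(B) = 0 and trace(B·B) = (n−1)/n, and let C ∈ ℝⁿ be a vector such that for all indices i, j, k one has B_{ij}·C_k = B_{ik}·C_j. Then C = 0. -/
/-!
The relation `B i j * C k = B i k * C j` says that, as soon as some `C k ≠ 0`, every row of `B`
is proportional to `C`, so `B` has rank one. A rank-one matrix satisfies
`trace (B * B) = (trace B) ^ 2`, which vanishes for trace-free `B`; this contradicts
`trace (B * B) = (n - 1) / n > 0`.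
-/

namespace Matrix

theorem trace_vecMulVec_mul_self {n R : Type*} [Fintype n] [CommSemiring R] (u v : n → R) :
    (vecMulVec u v * vecMulVec u v).trace = (vecMulVec u v).trace ^ 2 := by
  rw [vecMulVec_mul_vecMulVec, trace_vecMulVec, trace_vecMulVec, dotProduct_smul, smul_eq_mul,
    dotProduct_comm v u, sq]

theorem eq_vecMulVec_of_mul_eq_mul {m n K : Type*} [Field K] {B : Matrix m n K} {C : n → K}
    (hBC : ∀ i j k, B i j * C k = B i k * C j) {k : n} (hk : C k ≠ 0) :
    B = vecMulVec (fun i => B i k / C k) C := by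
  ext i j
  rw [vecMulVec_apply, div_mul_eq_mul_div, eq_div_iff hk, hBC]

end Matrix

theorem stmt_0_general {n : ℕ} (hn : 2 ≤ n) (B : Matrix (Fin n) (Fin n) ℝ)
    (htr : B.trace = 0)
    (htr2 : (B * B).trace = ((n : ℝ) - 1) / n)
    (C : Fin n → ℝ)
    (hBC : ∀ i j k, B i j * C k = B i k * C j) :
    C = 0 := by
  by_contra hC
  obtain ⟨k, hk⟩ := Function.ne_iff.mp hC
  have hB := Matrix.eq_vecMulVec_of_mul_eq_mul hBC hk
  have htr2_zero : (B * B).trace = 0 := by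
    rw [hB, Matrix.trace_vecMulVec_mul_self, ← hB, htr, sq, mul_zero]
  have hn' : (2 : ℝ) ≤ n := by exact_mod_cast hn
  have : (0 : ℝ) < ((n : ℝ) - 1) / n := div_pos (by linarith) (by linarith)
  linarith

/-- Algebraic core of Lemma 2.1: a symmetric trace-free matrix `B` with
`trace (B*B) = (n-1)/n` and the relation `B i j * C k = B i k * C j` forces `C = 0`. -/
theorem stmt_0 {n : ℕ} (hn : 2 ≤ n) (B : Matrix (Fin n) (Fin n) ℝ)
    (hsymm : B.IsSymm)
    (htr : B.trace = 0)
    (htr2 : (B * B).trace = ((n : ℝ) - 1) / n)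
    (C : Fin n → ℝ)
    (hBC : ∀ i j k, B i j * C k = B i k * C j) :
    C = 0 :=
  stmt_0_general hn B htr htr2 C hBC
end

section
/- Let ι be a finite type, let a : ι → ℝ be injective, and let b : ι → ℝ be such that for all distinct t, t' ∈ ι one has a(t) + a(t') = b(t)·b(t'). Then the cardinality of ι is at most 3. -/
/-! Subtracting the relations for the pairs `(t, u)` and `(t, v)` gives
`b t * (b u - b v) = a u - a v`. When `a u ≠ a v` this pins down `b t`, hence also
`a t = b t * b u - a u`, for every `t` outside `{u, v}`; injectivity of `a` then leaves room for
at most one such `t`. -/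

section PairRelation

variable {ι R : Type*} [CommRing R] {a b : ι → R}

theorem mul_sub_eq_sub_of_add_eq_mul (hab : ∀ t t', t ≠ t' → a t + a t' = b t * b t')
    {t u v : ι} (htu : t ≠ u) (htv : t ≠ v) : b t * (b u - b v) = a u - a v := by
  linear_combination hab t v htv - hab t u htu

theorem eq_of_add_eq_mul_of_ne_of_ne [IsDomain R] (ha : Function.Injective a)
    (hab : ∀ t t', t ≠ t' → a t + a t' = b t * b t') {u v t t' : ι} (huv : u ≠ v)
    (htu : t ≠ u) (htv : t ≠ v) (ht'u : t' ≠ u) (ht'v : t' ≠ v) : t = t' := by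
  have hbt := mul_sub_eq_sub_of_add_eq_mul hab htu htv
  have hbt' := mul_sub_eq_sub_of_add_eq_mul hab ht'u ht'v
  have hsub : b u - b v ≠ 0 := by
    rintro h
    rw [h, mul_zero, eq_comm, sub_eq_zero] at hbt
    exact huv (ha hbt)
  have hb : b t = b t' := mul_right_cancel₀ hsub (hbt.trans hbt'.symm)
  apply ha
  linear_combination hab t u htu - hab t' u ht'u + b u * hb

end PairRelation

/-- Algebraic core of Lemma 2.2: if distinct reals `a t` and reals `b t` satisfy
`a t + a t' = b t * b t'` for all `t ≠ t'`, then there are at most 3 indices. -/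
theorem stmt_1 {ι : Type*} [Fintype ι] (a b : ι → ℝ)
    (ha : Function.Injective a)
    (hab : ∀ t t', t ≠ t' → a t + a t' = b t * b t') :
    Fintype.card ι ≤ 3 := by
  by_contra! h
  obtain ⟨f⟩ : Nonempty (Fin 4 ↪ ι) := by
    rw [Function.Embedding.nonempty_iff_card_le, Fintype.card_fin]
    omega
  have hf : ∀ i j : Fin 4, i ≠ j → f i ≠ f j := fun _ _ hij => f.injective.ne hij
  exact hf 0 1 (by decide) <| eq_of_add_eq_mul_of_ne_of_ne ha hab (hf 2 3 (by decide))
    (hf 0 2 (by decide)) (hf 0 3 (by decide)) (hf 1 2 (by decide)) (hf 1 3 (by decide))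
end

section
/- Let ι be a finite type with at least 3 elements, let a : ι → ℝ be injective, and let b : ι → ℝ be such that for all distinct t, t' ∈ ι one has a(t) + a(t') = b(t)·b(t'). Then b is injective and b(t) ≠ 0 for every t ∈ ι. -/
section AddEqMul

variable {ι R : Type*} [NonUnitalNonAssocSemiring R] [IsCancelAdd R] {a b : ι → R}

theorem injective_of_add_eq_mul (ha : Function.Injective a)
    (hab : ∀ t t', t ≠ t' → a t + a t' = b t * b t')
    (hι : ∀ t t' : ι, ∃ s, s ≠ t ∧ s ≠ t') : Function.Injective b := by
  intro t t' hb
  by_contra hne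
  obtain ⟨s, hst, hst'⟩ := hι t t'
  refine hne (ha (add_right_cancel (b := a s) ?_))
  rw [hab t s hst.symm, hab t' s hst'.symm, hb]

theorem ne_zero_of_add_eq_mul (ha : Function.Injective a)
    (hab : ∀ t t', t ≠ t' → a t + a t' = b t * b t')
    (hι : ∀ t t' : ι, ∃ s, s ≠ t ∧ s ≠ t') (t : ι) : b t ≠ 0 := by
  intro hbt
  obtain ⟨s, hst, -⟩ := hι t t
  obtain ⟨s', hs't, hs's⟩ := hι t s
  refine hs's (ha (add_left_cancel (a := a t) ?_))
  rw [hab t s' hs't.symm, hab t s hst.symm, hbt, zero_mul, zero_mul]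

end AddEqMul

/-- Intermediate claim of Lemmas 2.2/2.3: with at least 3 indices, the relation
`a t + a t' = b t * b t'` (`t ≠ t'`, `a` injective) makes `b` injective and nowhere zero. -/
theorem stmt_2 {ι : Type*} [Fintype ι] (hcard : 3 ≤ Fintype.card ι)
    (a b : ι → ℝ) (ha : Function.Injective a)
    (hab : ∀ t t', t ≠ t' → a t + a t' = b t * b t') :
    Function.Injective b ∧ ∀ t, b t ≠ 0 := by
  have hι (t t' : ι) : ∃ s, s ≠ t ∧ s ≠ t' :=
    Cardinal.exists_ne_ne_of_three_le (by simpa using hcard) t t'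
  exact ⟨injective_of_add_eq_mul ha hab hι, ne_zero_of_add_eq_mul ha hab hι⟩
end

section
/- Let n and s be positive integers with s ≥ 3, let Γ : Fin n → Fin s be a surjective map (so each fiber Γ⁻¹(t) is nonempty), let a : Fin s → ℝ be injective, and let b : Fin n → ℝ be such that whenever i, j ∈ Fin n satisfy Γ(i) ≠ Γ(j) one has a(Γ(i)) + a(Γ(j)) = b(i)·b(j). Then b is constant on each fiber of Γ, i.e., Γ(i) = Γ(i') implies b(i) = b(i'). -/
/-!
If `b j = 0`, then `a t = -a (Γ j)` for every `t ≠ Γ j`; since there are at least two such `t`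
and `a` is injective, this is impossible, so `b` never vanishes. Given `i, i'` in the same fiber,
pick `j` in another fiber: `b i * b j = a (Γ i) + a (Γ j) = b i' * b j`, and cancel `b j`.
-/

theorem Fintype.exists_pair_ne_of_two_lt_card {κ : Type*} [Fintype κ] (hκ : 2 < Fintype.card κ)
    (t : κ) : ∃ t₁ t₂, t₁ ≠ t ∧ t₂ ≠ t ∧ t₁ ≠ t₂ := by
  classical
  have hcard : 1 < (Finset.univ.erase t).card := by
    rw [Finset.card_erase_of_mem (Finset.mem_univ t), Finset.card_univ]
    omega
  obtain ⟨t₁, ht₁, t₂, ht₂, ht₁₂⟩ := Finset.one_lt_card.mp hcard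
  exact ⟨t₁, t₂, Finset.ne_of_mem_erase ht₁, Finset.ne_of_mem_erase ht₂, ht₁₂⟩

section AddEqMul

variable {ι κ R : Type*} [Ring R] {Γ : ι → κ} {a : κ → R} {b : ι → R}

theorem apply_ne_zero_of_add_eq_mul [Fintype κ] (hκ : 2 < Fintype.card κ)
    (hΓ : Function.Surjective Γ) (ha : Function.Injective a)
    (hab : ∀ i j, Γ i ≠ Γ j → a (Γ i) + a (Γ j) = b i * b j) (j : ι) : b j ≠ 0 := by
  intro hj
  obtain ⟨t₁, t₂, ht₁, ht₂, ht₁₂⟩ := Fintype.exists_pair_ne_of_two_lt_card hκ (Γ j)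
  obtain ⟨i₁, rfl⟩ := hΓ t₁
  obtain ⟨i₂, rfl⟩ := hΓ t₂
  have h₁ := hab i₁ j ht₁
  have h₂ := hab i₂ j ht₂
  rw [hj, mul_zero] at h₁ h₂
  exact ht₁₂ (ha (add_right_cancel (h₁.trans h₂.symm)))

theorem apply_eq_apply_of_add_eq_mul [NoZeroDivisors R] [Nontrivial κ]
    (hΓ : Function.Surjective Γ) (hb : ∀ j, b j ≠ 0)
    (hab : ∀ i j, Γ i ≠ Γ j → a (Γ i) + a (Γ j) = b i * b j) {i i' : ι} (h : Γ i = Γ i') :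
    b i = b i' := by
  obtain ⟨t, ht⟩ := exists_ne (Γ i)
  obtain ⟨j, rfl⟩ := hΓ t
  have hi := hab i j ht.symm
  have hi' := hab i' j (h ▸ ht.symm)
  rw [← h] at hi'
  exact mul_right_cancel₀ (hb j) (hi.symm.trans hi')

end AddEqMul

theorem stmt_4_general {n s : ℕ} (hs : 3 ≤ s)
    (Γ : Fin n → Fin s) (hΓ : Function.Surjective Γ)
    (a : Fin s → ℝ) (ha : Function.Injective a)
    (b : Fin n → ℝ)
    (hab : ∀ i j, Γ i ≠ Γ j → a (Γ i) + a (Γ j) = b i * b j) :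
    ∀ i i', Γ i = Γ i' → b i = b i' := by
  have hcard : 2 < Fintype.card (Fin s) := by rw [Fintype.card_fin]; omega
  have : Nontrivial (Fin s) := Fin.nontrivial_iff_two_le.mpr (by omega)
  intro i i' h
  exact apply_eq_apply_of_add_eq_mul hΓ (apply_ne_zero_of_add_eq_mul hcard hΓ ha hab) hab h

/-- Step in Lemma 2.2: from `R_{ijij} = a_t + a_{t'} − b_i b_j = 0` across distinct
Blaschke eigenspaces (`s ≥ 3` eigenvalues), `b` is constant on each eigenspace. -/
theorem stmt_4 {n s : ℕ} (hn : 0 < n) (hs : 3 ≤ s)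
    (Γ : Fin n → Fin s) (hΓ : Function.Surjective Γ)
    (a : Fin s → ℝ) (ha : Function.Injective a)
    (b : Fin n → ℝ)
    (hab : ∀ i j, Γ i ≠ Γ j → a (Γ i) + a (Γ j) = b i * b j) :
    ∀ i i', Γ i = Γ i' → b i = b i' :=
  stmt_4_general hs Γ hΓ a ha b hab
end

section
/- Let n, p, q be positive integers with p + q + 2 ≤ n and let r > 0. Set a = r/√(r²+1), b = √(r²+1)/r, c = (pr² + q(r²+1))/(n·r·√(r²+1)), and d = (p(n−p)r⁴ − 2pq·r²(r²+1) + q(n−q)(r²+1)²)/(n−1). Then d ≠ 0 and the three real numbers a₁ = (c² − 2ca − 1)/(2d), a₂ = (c² − 2cb − 1)/(2d), a₃ = (c² − 1)/(2d) are pairwise distinct. -/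
/-!
With `x = r²` and `y = r² + 1`, the numerator of `d` is `n (p x² + q y²) - (p x + q y)²`, and since
`y - x = 1` it equals `(n - p - q)(p x² + q y²) + p q`, which is positive; so `d > 0`. The three
eigenvalues are the values of the injective affine map `x ↦ (c² - 2 c x - 1) / (2 d)` (`c > 0`) at
`a`, `b` and `0`, and these are distinct because `0 < a < 1 < b`.
-/

open Real

lemma blaschke_numerator_eq (n p q r : ℝ) :
    p * (n - p) * r ^ 4 - 2 * p * q * r ^ 2 * (r ^ 2 + 1) + q * (n - q) * (r ^ 2 + 1) ^ 2
      = (n - p - q) * (p * r ^ 4 + q * (r ^ 2 + 1) ^ 2) + p * q := by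
  ring

lemma blaschke_numerator_pos {n p q : ℝ} (hp : 0 < p) (hq : 0 < q) (hpq : p + q ≤ n) (r : ℝ) :
    0 < p * (n - p) * r ^ 4 - 2 * p * q * r ^ 2 * (r ^ 2 + 1) + q * (n - q) * (r ^ 2 + 1) ^ 2 := by
  rw [blaschke_numerator_eq]
  have : 0 ≤ (n - p - q) * (p * r ^ 4 + q * (r ^ 2 + 1) ^ 2) :=
    mul_nonneg (by linarith) (by positivity)
  linarith [mul_pos hp hq]

lemma lt_sqrt_sq_add_one (r : ℝ) : r < √(r ^ 2 + 1) :=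
  (le_abs_self r).trans_lt (by rw [← sqrt_sq_eq_abs]; exact sqrt_lt_sqrt (sq_nonneg r) (by linarith))

lemma injective_affine_div {c d : ℝ} (hc : c ≠ 0) (hd : d ≠ 0) :
    Function.Injective fun x : ℝ => (c ^ 2 - 2 * c * x - 1) / (2 * d) := by
  intro x y h
  have := (div_left_inj' (mul_ne_zero two_ne_zero hd)).mp h
  exact mul_left_cancel₀ hc (by linarith : c * x = c * y)

/-- The three Blaschke eigenvalues of the warped product embedding in Theorem 3.4
are pairwise distinct (and the conformal factor numerator `d` is nonzero). -/
theorem stmt_8 (n p q : ℕ) (hp : 0 < p) (hq : 0 < q) (hpq : p + q + 2 ≤ n)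
    (r : ℝ) (hr : 0 < r) :
    let a := r / Real.sqrt (r ^ 2 + 1)
    let b := Real.sqrt (r ^ 2 + 1) / r
    let c := ((p : ℝ) * r ^ 2 + q * (r ^ 2 + 1)) / (n * r * Real.sqrt (r ^ 2 + 1))
    let d := ((p : ℝ) * ((n : ℝ) - p) * r ^ 4 - 2 * p * q * r ^ 2 * (r ^ 2 + 1)
      + q * ((n : ℝ) - q) * (r ^ 2 + 1) ^ 2) / ((n : ℝ) - 1)
    d ≠ 0 ∧
      (c ^ 2 - 2 * c * a - 1) / (2 * d) ≠ (c ^ 2 - 2 * c * b - 1) / (2 * d) ∧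
      (c ^ 2 - 2 * c * a - 1) / (2 * d) ≠ (c ^ 2 - 1) / (2 * d) ∧
      (c ^ 2 - 2 * c * b - 1) / (2 * d) ≠ (c ^ 2 - 1) / (2 * d) := by
  intro a b c d
  have hp' : (0 : ℝ) < p := by exact_mod_cast hp
  have hq' : (0 : ℝ) < q := by exact_mod_cast hq
  have hn : (p : ℝ) + q + 2 ≤ n := by exact_mod_cast hpq
  have hd : 0 < d := div_pos (blaschke_numerator_pos hp' hq' (by linarith) r) (by linarith)
  have hc : 0 < c := div_pos (by positivity) (mul_pos (mul_pos (by linarith) hr) (by positivity))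
  have ha : 0 < a := by positivity
  have hab : a < b := calc
    a < 1 := (div_lt_one (by positivity)).mpr (lt_sqrt_sq_add_one r)
    _ < b := (one_lt_div hr).mpr (lt_sqrt_sq_add_one r)
  have hinj {x y : ℝ} (hxy : x ≠ y) := (injective_affine_div hc.ne' hd.ne').ne hxy
  have h0 : c ^ 2 - 1 = c ^ 2 - 2 * c * 0 - 1 := by ring
  rw [h0]
  exact ⟨hd.ne', hinj hab.ne, hinj ha.ne', hinj (ha.trans hab).ne'⟩
end
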